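/- Let c ∈ ℝ, let Θ : ℝ → ℝ be C², let W : ℝ → ℝ be differentiable, let U ⊆ ℝ² be open, and let r², r³ : U → ℝ be differentiable such that for all (t,x) ∈ U: x = (r²(t,x) + c − 1) t + e^{r²(t,x)} Θ'(r²(t,x)) and r³(t,x) = W(e^{−r²(t,x)} t − Θ'(r²(t,x)) − Θ(r²(t,x))). Then the triple (r¹, r², r³) with r¹ ≡ c solves the diagonalized drift flux system (S) on U (the singular solution family). -/

import Mathlib

/- STATEMENT 5: the singular solution family (r¹ ≡ c) of the diagonalized
drift flux system (S). -/

noncomputable section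

/-- Partial derivative with respect to the first ("time") variable. -/
def pt (f : ℝ × ℝ → ℝ) (p : ℝ × ℝ) : ℝ := fderiv ℝ f p (1, 0)

/-- Partial derivative with respect to the second ("space") variable. -/
def px (f : ℝ × ℝ → ℝ) (p : ℝ × ℝ) : ℝ := fderiv ℝ f p (0, 1)

theorem singular_solution_family
    (c : ℝ) (Θ : ℝ → ℝ) (hΘ : ContDiff ℝ 2 Θ)
    (W : ℝ → ℝ) (hW : Differentiable ℝ W)
    (U : Set (ℝ × ℝ)) (hU : IsOpen U)
    (r₂ r₃ : ℝ × ℝ → ℝ)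
    (hr₂ : ∀ p ∈ U, DifferentiableAt ℝ r₂ p)
    (hr₃ : ∀ p ∈ U, DifferentiableAt ℝ r₃ p)
    (hx : ∀ p ∈ U,
      p.2 = (r₂ p + c - 1) * p.1 + Real.exp (r₂ p) * deriv Θ (r₂ p))
    (hr : ∀ p ∈ U,
      r₃ p = W (Real.exp (-r₂ p) * p.1 - deriv Θ (r₂ p) - Θ (r₂ p))) :
    let r₁ : ℝ × ℝ → ℝ := fun _ => c
    ∀ p ∈ U,
      pt r₁ p + (r₁ p + r₂ p + 1) * px r₁ p = 0 ∧
      pt r₂ p + (r₁ p + r₂ p - 1) * px r₂ p = 0 ∧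
      pt r₃ p + (r₁ p + r₂ p) * px r₃ p = 0 := by
  intro r₁ p hp
  -- basic smoothness facts about Θ
  have hΘ1 : ContDiff ℝ 1 (deriv Θ) := by
    have h2 : ContDiff ℝ ((1:ℕ) + 1) Θ := by exact_mod_cast hΘ
    exact (contDiff_succ_iff_deriv.mp h2).2.2
  have hΘd : ∀ s : ℝ, HasDerivAt Θ (deriv Θ s) s := fun s =>
    ((hΘ.differentiable (by norm_num)) s).hasDerivAt
  have hΘ'd : ∀ s : ℝ, HasDerivAt (deriv Θ) (deriv (deriv Θ) s) s := fun s =>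
    ((hΘ1.differentiable (by norm_num)) s).hasDerivAt
  set r := r₂ p with hrdef
  set D : ℝ × ℝ →L[ℝ] ℝ := fderiv ℝ r₂ p with hD
  have hDd : HasFDerivAt r₂ D p := (hr₂ p hp).hasFDerivAt
  set a : ℝ := D (1, 0) with ha0
  set b : ℝ := D (0, 1) with hb0
  -- the function A s = exp s * Θ' s and its derivative
  have hA : ∀ s : ℝ, HasDerivAt (fun s => Real.exp s * deriv Θ s)
      (Real.exp s * deriv Θ s + Real.exp s * deriv (deriv Θ) s) s := fun s =>
    (Real.hasDerivAt_exp s).mul (hΘ'd s)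
  -- F q = (r₂ q + c - 1) * q.1 + exp (r₂ q) * Θ' (r₂ q)
  have hF : HasFDerivAt (fun q : ℝ × ℝ => (r₂ q + c - 1) * q.1 + Real.exp (r₂ q) * deriv Θ (r₂ q))
      (((r + c - 1) • (ContinuousLinearMap.fst ℝ ℝ ℝ) + p.1 • D) +
        (Real.exp r * deriv Θ r + Real.exp r * deriv (deriv Θ) r) • D) p := by
    exact (((hDd.add_const c).sub_const 1).mul (hasFDerivAt_fst)).add
      ((hA r).comp_hasFDerivAt p hDd)
  have hsnd : HasFDerivAt (fun q : ℝ × ℝ => q.2) (ContinuousLinearMap.snd ℝ ℝ ℝ) p :=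
    hasFDerivAt_snd
  have heq : (fun q : ℝ × ℝ => q.2) =ᶠ[nhds p]
      (fun q : ℝ × ℝ => (r₂ q + c - 1) * q.1 + Real.exp (r₂ q) * deriv Θ (r₂ q)) := by
    filter_upwards [hU.mem_nhds hp] with q hq
    exact hx q hq
  have hLeq : (ContinuousLinearMap.snd ℝ ℝ ℝ : ℝ × ℝ →L[ℝ] ℝ) =
      (((r + c - 1) • (ContinuousLinearMap.fst ℝ ℝ ℝ) + p.1 • D) +
        (Real.exp r * deriv Θ r + Real.exp r * deriv (deriv Θ) r) • D) := by
    rw [← hsnd.fderiv, ← hF.fderiv]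
    exact heq.fderiv_eq
  have key1 : (0 : ℝ) = (r + c - 1)
      + a * (p.1 + (Real.exp r * deriv Θ r + Real.exp r * deriv (deriv Θ) r)) := by
    have := congrArg (fun L : ℝ × ℝ →L[ℝ] ℝ => L (1, 0)) hLeq
    simp at this
    rw [this]; ring
  have key2 : (1 : ℝ)
      = b * (p.1 + (Real.exp r * deriv Θ r + Real.exp r * deriv (deriv Θ) r)) := by
    have := congrArg (fun L : ℝ × ℝ →L[ℝ] ℝ => L (0, 1)) hLeq
    simp at this
    rw [this]; ring
  have hab : a = -(r + c - 1) * b := by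
    have h1 : a * (p.1 + (Real.exp r * deriv Θ r + Real.exp r * deriv (deriv Θ) r))
        = -(r + c - 1) := by linarith
    calc a = a * (b * (p.1 + (Real.exp r * deriv Θ r + Real.exp r * deriv (deriv Θ) r))) := by
          rw [← key2]; ring
    _ = (a * (p.1 + (Real.exp r * deriv Θ r + Real.exp r * deriv (deriv Θ) r))) * b := by ring
    _ = -(r + c - 1) * b := by rw [h1]
  -- r₃ equation setup
  set φ : ℝ × ℝ → ℝ := fun q => Real.exp (-r₂ q) * q.1 - deriv Θ (r₂ q) - Θ (r₂ q) with hφ0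
  have hexp : HasDerivAt (fun s : ℝ => Real.exp (-s)) (-Real.exp (-r)) r := by
    have := (Real.hasDerivAt_exp (-r)).comp r ((hasDerivAt_id r).neg)
    simpa [Function.comp_def] using this
  set Φ : ℝ × ℝ →L[ℝ] ℝ :=
    ((Real.exp (-r) • (ContinuousLinearMap.fst ℝ ℝ ℝ) + p.1 • ((-Real.exp (-r)) • D))
      - (deriv (deriv Θ) r) • D) - (deriv Θ r) • D with hΦ0
  have hφd : HasFDerivAt φ Φ p := by
    exact ((((hexp.comp_hasFDerivAt p hDd).mul hasFDerivAt_fst).sub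
      ((hΘ'd r).comp_hasFDerivAt p hDd)).sub ((hΘd r).comp_hasFDerivAt p hDd))
  set w : ℝ := deriv W (φ p) with hw0
  have hWd : HasDerivAt W w (φ p) := (hW (φ p)).hasDerivAt
  have hcomp : HasFDerivAt (fun q => W (φ q)) (w • Φ) p := hWd.comp_hasFDerivAt p hφd
  have heq3 : r₃ =ᶠ[nhds p] (fun q => W (φ q)) := by
    filter_upwards [hU.mem_nhds hp] with q hq
    exact hr q hq
  have hE : fderiv ℝ r₃ p = w • Φ := by
    rw [heq3.fderiv_eq]; exact hcomp.fderiv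
  -- now compute the three equations
  have hexpne : Real.exp r ≠ 0 := Real.exp_ne_zero r
  have hexpinv : Real.exp (-r) * Real.exp r = 1 := by
    rw [← Real.exp_add]; simp
  refine ⟨?_, ?_, ?_⟩
  · have h1 : pt r₁ p = 0 := by
      simp [pt, r₁, fderiv_const]
    have h2 : px r₁ p = 0 := by
      simp [px, r₁, fderiv_const]
    rw [h1, h2]; ring
  · have h1 : pt r₂ p = a := rfl
    have h2 : px r₂ p = b := rfl
    rw [h1, h2]
    show a + (c + r - 1) * b = 0
    rw [hab]; ring
  · have h1 : pt r₃ p = w * (Φ (1, 0)) := by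
      simp [pt, hE]
    have h2 : px r₃ p = w * (Φ (0, 1)) := by
      simp [px, hE]
    have hΦ1 : Φ (1, 0) = Real.exp (-r) + p.1 * (-Real.exp (-r) * a)
        - deriv (deriv Θ) r * a - deriv Θ r * a := by
      simp [hΦ0]; rfl
    have hΦ2 : Φ (0, 1) = p.1 * (-Real.exp (-r) * b)
        - deriv (deriv Θ) r * b - deriv Θ r * b := by
      simp [hΦ0]; rfl
    rw [h1, h2, hΦ1, hΦ2]
    show w * _ + (c + r) * (w * _) = 0
    have hsum : a + (c + r) * b = b := by rw [hab]; ring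
    have hfin : (Real.exp (-r) + p.1 * (-Real.exp (-r) * a)
        - deriv (deriv Θ) r * a - deriv Θ r * a)
        + (c + r) * (p.1 * (-Real.exp (-r) * b)
        - deriv (deriv Θ) r * b - deriv Θ r * b) = 0 := by
      have expand : (Real.exp (-r) + p.1 * (-Real.exp (-r) * a)
          - deriv (deriv Θ) r * a - deriv Θ r * a)
          + (c + r) * (p.1 * (-Real.exp (-r) * b)
          - deriv (deriv Θ) r * b - deriv Θ r * b)
          = Real.exp (-r) - (a + (c + r) * b) *
            (Real.exp (-r) * p.1 + deriv (deriv Θ) r + deriv Θ r) := by ring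
      rw [expand, hsum]
      linear_combination Real.exp (-r) * key2
        + (b * (deriv Θ r + deriv (deriv Θ) r)) * hexpinv
    calc w * (Real.exp (-r) + p.1 * (-Real.exp (-r) * a)
        - deriv (deriv Θ) r * a - deriv Θ r * a)
        + (c + r) * (w * (p.1 * (-Real.exp (-r) * b)
        - deriv (deriv Θ) r * b - deriv Θ r * b))
        = w * ((Real.exp (-r) + p.1 * (-Real.exp (-r) * a)
        - deriv (deriv Θ) r * a - deriv Θ r * a)
        + (c + r) * (p.1 * (-Real.exp (-r) * b)
        - deriv (deriv Θ) r * b - deriv Θ r * b)) := by ring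
      _ = 0 := by rw [hfin]; ring

end
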